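/- arXiv:2410.13093 — 5 statements merged into one kernel-verified Lean document; each statement's English description precedes it below -/
import Mathlib

section
/- Let f_1, …, f_p : R^n → R be linear maps with p < n, and δ_1, …, δ_p > 0. Then the system of inequalities |f_s(K)| < δ_s (s = 1, …, p) has a sequence of nonzero integer solutions K_l ∈ Z^n with ‖K_l‖ → ∞ and bounded gap, i.e., ‖K_{l+1} − K_l‖ is bounded uniformly in l. Moreover, for any fixed positive integer N one can arrange that all components of every K_l are divisible by N. -/
/-! Since `p < n`, the forms `f s` share a kernel vector `v ≠ 0`, and by continuity every point
within some `ε` of the line `ℝ v` satisfies `|f s w| < δ s / N`. The fractional parts of `t • v`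
stay in a compact cube, so a finite `ε`-net of this orbit shows that the times `t` at which `t • v`
is `ε`-close to `ℤⁿ` meet every interval of some fixed length `R`. Choosing one such time in each
window `[(l + ε) / ‖v‖, (l + ε) / ‖v‖ + R]` gives integer points `m l` near the line with
`‖m l‖ > l` and bounded gaps, and `K l = N • m l`. -/

open Filter Metric Set

theorem exists_ne_zero_forall_apply_eq_zero {K V ι : Type*} [Field K] [AddCommGroup V]
    [Module K V] [FiniteDimensional K V] [Fintype ι] (f : ι → V →ₗ[K] K)
    (h : Fintype.card ι < Module.finrank K V) : ∃ v ≠ 0, ∀ i, f i v = 0 := by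
  have hker : LinearMap.ker (LinearMap.pi f) ≠ ⊥ :=
    LinearMap.ker_ne_bot_of_finrank_lt (by simpa using h)
  obtain ⟨v, hv, hv0⟩ := Submodule.exists_mem_ne_zero_of_ne_bot hker
  exact ⟨v, hv0, fun i => congrFun (LinearMap.mem_ker.mp hv) i⟩

theorem exists_pos_forall_abs_apply_lt_of_near_line {ι E : Type*} [Finite ι]
    [NormedAddCommGroup E] [NormedSpace ℝ E] [FiniteDimensional ℝ E] {f : ι → E →ₗ[ℝ] ℝ} {v : E}
    (hfv : ∀ s, f s v = 0) {δ : ι → ℝ} (hδ : ∀ s, 0 < δ s) :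
    ∃ ε > 0, ∀ (w : E) (t : ℝ), ‖t • v - w‖ < ε → ∀ s, |f s w| < δ s := by
  have hU : IsOpen {w : E | ∀ s, |f s w| < δ s} := by
    simp only [ofPred_forall]
    exact isOpen_iInter_of_finite fun s =>
      isOpen_lt (f s).continuous_of_finiteDimensional.abs continuous_const
  obtain ⟨ε, hε, hεU⟩ := Metric.isOpen_iff.1 hU 0 (by simpa using hδ)
  refine ⟨ε, hε, fun w t hwt s => ?_⟩
  have hmem : w - t • v ∈ ball 0 ε := by rwa [mem_ball_zero_iff, norm_sub_rev]
  simpa only [map_sub, map_smul, hfv, smul_zero, sub_zero] using hεU hmem s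

section LatticeApprox

variable {ι : Type*} [Fintype ι]

theorem norm_fract_le_one (w : ι → ℝ) : ‖fun i => Int.fract (w i)‖ ≤ 1 :=
  (pi_norm_le_iff_of_nonneg zero_le_one).2 fun i => by
    rw [Real.norm_of_nonneg (Int.fract_nonneg _)]
    exact (Int.fract_lt_one _).le

theorem exists_forall_exists_mem_Icc_near_intVec (v : ι → ℝ) {ε : ℝ}
    (hε : 0 < ε) : ∃ R, ∀ x : ℝ, ∃ t ∈ Icc x (x + R), ∃ m : ι → ℤ,
      ‖t • v - Int.cast ∘ m‖ < ε := by
  set F : ℝ → ι → ℝ := fun t i => Int.fract (t * v i)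
  have hF : ∀ a b, F a - F b = (a - b) • v - Int.cast ∘ fun i => ⌊a * v i⌋ - ⌊b * v i⌋ := by
    intro a b; funext i
    simp only [F, Int.fract, Pi.sub_apply, Pi.smul_apply, Function.comp_apply, smul_eq_mul]
    push_cast; ring
  have hbdd : TotallyBounded (F '' univ) :=
    (isCompact_closedBall 0 1).totallyBounded.subset <| by
      rintro _ ⟨t, -, rfl⟩
      simpa using norm_fract_le_one (t • v)
  -- A finite `ε`-net of the orbit `F '' univ` has its times in some `[a, b]`; if `F (x + b)` is
  -- `ε`-close to `F s`, then `t = x + b - s` works.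
  obtain ⟨τ, -, hτfin, hcover⟩ :=
    exists_subset_image_finite_and.1 (finite_approx_of_totallyBounded hbdd ε hε)
  obtain ⟨a, ha⟩ := hτfin.bddBelow
  obtain ⟨b, hb⟩ := hτfin.bddAbove
  refine ⟨b - a, fun x => ?_⟩
  obtain ⟨_, ⟨s, hsτ, rfl⟩, hs⟩ := mem_iUnion₂.1 <| hcover (mem_image_of_mem F (mem_univ (x + b)))
  refine ⟨x + b - s, ⟨by linarith [hb hsτ], by linarith [ha hsτ]⟩, ?_⟩
  rw [mem_ball, dist_eq_norm, hF] at hs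
  exact ⟨_, hs⟩

theorem exists_intVec_seq_near_line {v : ι → ℝ} (hv : v ≠ 0) {ε : ℝ} (hε : 0 < ε) :
    ∃ m : ℕ → ι → ℤ, (∀ l, ∃ t : ℝ, ‖t • v - Int.cast ∘ m l‖ < ε) ∧
      (∀ l : ℕ, (l : ℝ) < ‖(Int.cast ∘ m l : ι → ℝ)‖) ∧
      ∃ C, ∀ l, ‖(Int.cast ∘ m (l + 1) - Int.cast ∘ m l : ι → ℝ)‖ ≤ C := by
  obtain ⟨R, hR⟩ := exists_forall_exists_mem_Icc_near_intVec v hε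
  have hv : 0 < ‖v‖ := norm_pos_iff.2 hv
  choose t ht m hm using fun l : ℕ => hR ((l + ε) / ‖v‖)
  have hscale : ∀ l : ℕ, (l : ℝ) + ε ≤ t l * ‖v‖ ∧ t l * ‖v‖ ≤ l + ε + R * ‖v‖ := fun l => by
    obtain ⟨hlo, hhi⟩ := ht l
    have hhi := mul_le_mul_of_nonneg_right hhi hv.le
    rw [add_mul, div_mul_cancel₀ _ hv.ne'] at hhi
    exact ⟨(div_le_iff₀ hv).1 hlo, hhi⟩
  have hnorm : ∀ l, ‖t l • v‖ = t l * ‖v‖ := fun l => by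
    rw [norm_smul, Real.norm_of_nonneg]
    nlinarith [hscale l, (Nat.cast_nonneg l : (0 : ℝ) ≤ l)]
  refine ⟨m, fun l => ⟨t l, hm l⟩, fun l => ?_, 2 * ε + (1 + R * ‖v‖), fun l => ?_⟩
  · have := norm_sub_norm_le (t l • v) (Int.cast ∘ m l)
    linarith [hm l, hnorm l, hscale l]
  · have hsplit : (Int.cast ∘ m (l + 1) - Int.cast ∘ m l : ι → ℝ) =
        (t (l + 1) - t l) • v - (t (l + 1) • v - Int.cast ∘ m (l + 1)) + (t l • v - Int.cast ∘ m l) := by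
      rw [sub_smul]
      abel
    have hstep : ‖(t (l + 1) - t l) • v‖ ≤ 1 + R * ‖v‖ := by
      rw [norm_smul, Real.norm_eq_abs, ← abs_of_pos hv, ← abs_mul, abs_of_pos hv, sub_mul, abs_le]
      have hl := hscale l
      have hl₁ := hscale (l + 1)
      push_cast at hl₁
      constructor <;> linarith
    rw [hsplit]
    linarith [norm_add_le_of_le (norm_sub_le_of_le hstep (hm (l + 1)).le) (hm l).le]

end LatticeApprox

/-- Bounded-gap Minkowski lemma: for linear maps f₁,…,f_p : ℝⁿ → ℝ with p < n and
positive δ₁,…,δ_p, the system |f_s(K)| < δ_s has a sequence of nonzero integer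
solutions K_l with ‖K_l‖ → ∞ and bounded gap, all components divisible by N. -/
theorem minkowski_bounded_gap (n p : ℕ) (hpn : p < n)
    (f : Fin p → ((Fin n → ℝ) →ₗ[ℝ] ℝ)) (δ : Fin p → ℝ) (hδ : ∀ s, 0 < δ s)
    (N : ℕ) (hN : 0 < N) :
    ∃ K : ℕ → (Fin n → ℤ),
      (∀ l, K l ≠ 0) ∧
      (∀ l s, |f s (fun i => ((K l i : ℝ)))| < δ s) ∧
      (∀ l i, (N : ℤ) ∣ K l i) ∧
      Tendsto (fun l => ‖(fun i => ((K l i : ℝ)) : Fin n → ℝ)‖) atTop atTop ∧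
      ∃ C : ℝ, ∀ l, ‖(fun i => ((K (l+1) i - K l i : ℤ) : ℝ) : Fin n → ℝ)‖ ≤ C := by
  obtain ⟨v, hv, hfv⟩ := exists_ne_zero_forall_apply_eq_zero f (by simpa using hpn)
  have hN' : (0 : ℝ) < N := by exact_mod_cast hN
  obtain ⟨ε, hε, hnear_line⟩ :=
    exists_pos_forall_abs_apply_lt_of_near_line hfv fun s => div_pos (hδ s) hN'
  obtain ⟨m, hnear, hgrow, C, hgap⟩ := exists_intVec_seq_near_line hv hε
  set K : ℕ → Fin n → ℤ := fun l i => N * m l i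
  have hcast : ∀ l, (fun i => (K l i : ℝ)) = (N : ℝ) • (Int.cast ∘ m l : Fin n → ℝ) := by
    intro l; funext i; simp [K]
  have hK : ∀ l : ℕ, (l : ℝ) < ‖fun i => (K l i : ℝ)‖ := fun l => by
    rw [hcast, norm_smul, RCLike.norm_natCast]
    exact (hgrow l).trans_le (le_mul_of_one_le_left (norm_nonneg _) (by exact_mod_cast hN))
  refine ⟨K, fun l hl => ?_, fun l s => ?_, fun l i => dvd_mul_right _ _,
    tendsto_atTop_mono (fun l => (hK l).le) tendsto_natCast_atTop_atTop, N * C, fun l => ?_⟩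
  · have := hK l
    simp only [hl, Pi.zero_apply, Int.cast_zero, ← Pi.zero_def, norm_zero] at this
    exact this.not_ge l.cast_nonneg
  · obtain ⟨t, ht⟩ := hnear l
    rw [hcast, map_smul, smul_eq_mul, abs_mul, Nat.abs_cast, ← lt_div_iff₀' hN']
    exact hnear_line _ t ht s
  · have hdiff : (fun i => ((K (l + 1) i - K l i : ℤ) : ℝ)) =
        (N : ℝ) • (Int.cast ∘ m (l + 1) - Int.cast ∘ m l : Fin n → ℝ) := by
      funext i; simp [K, mul_sub]
    rw [hdiff, norm_smul, RCLike.norm_natCast]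
    exact mul_le_mul_of_nonneg_left (hgap l) N.cast_nonneg
end

section
/- Let f : N → R with f(k) = kδ for some δ ≥ 2, and g, h : N → Z with f(k) − m ≤ g(k) ≤ h(k) ≤ f(k) + m for all k, where m ≥ 1 is an integer. Fix ℓ_0 ∈ N with 2ℓ_0 ≥ 3(m+1), an integer d and k_0 ∈ N with k_0 > ℓ_0 and |f(k_0) − d| < 1/2. Suppose that for 1 ≤ ℓ ≤ ℓ_0 one has h(k_0 − ℓ) ≤ d − g(ℓ) + m and g(ℓ) ≥ m + 2. Then h(k) ≤ d − 2 for all k < k_0. -/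
/-- Abstract form of (IR3′): f(k) = kδ with δ ≥ 2, integer functions g ≤ h with
f(k) − m ≤ g(k) ≤ h(k) ≤ f(k) + m (m ≥ 1), a recurrence event (d, k₀) with
k₀ > ℓ₀, 2ℓ₀ ≥ 3(m+1), |f(k₀) − d| < 1/2, and for 1 ≤ ℓ ≤ ℓ₀ both
h(k₀ − ℓ) ≤ d − g(ℓ) + m and g(ℓ) ≥ m + 2. Then h(k) ≤ d − 2 for all k < k₀. -/
theorem index_recurrence_below (δ : ℝ) (hδ : 2 ≤ δ) (m : ℤ) (hm : 1 ≤ m)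
    (g h : ℕ → ℤ)
    (hbound : ∀ k : ℕ, 1 ≤ k →
      (k : ℝ) * δ - (m : ℝ) ≤ (g k : ℝ) ∧ g k ≤ h k ∧ (h k : ℝ) ≤ (k : ℝ) * δ + (m : ℝ))
    (ℓ0 : ℕ) (hℓ0 : 3 * (m + 1) ≤ 2 * (ℓ0 : ℤ))
    (d : ℤ) (k0 : ℕ) (hk0 : ℓ0 < k0)
    (hd : |(k0 : ℝ) * δ - (d : ℝ)| < 1/2)
    (hrec : ∀ ℓ : ℕ, 1 ≤ ℓ → ℓ ≤ ℓ0 → h (k0 - ℓ) ≤ d - g ℓ + m)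
    (hdc : ∀ ℓ : ℕ, 1 ≤ ℓ → ℓ ≤ ℓ0 → m + 2 ≤ g ℓ) :
    ∀ k : ℕ, 1 ≤ k → k < k0 → h k ≤ d - 2 := by
  intro k hk1 hkk0
  by_cases hc : k0 ≤ k + ℓ0
  · -- near case: k = k0 - ℓ with 1 ≤ ℓ ≤ ℓ0
    have h1 : 1 ≤ k0 - k := by omega
    have h2 : k0 - k ≤ ℓ0 := by omega
    have hkeq : k0 - (k0 - k) = k := by omega
    have hr := hrec (k0 - k) h1 h2
    rw [hkeq] at hr
    have hg := hdc (k0 - k) h1 h2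
    omega
  · -- far case: analytic estimate
    push_neg at hc
    obtain ⟨-, -, hh⟩ := hbound k hk1
    have hd1 : (k0 : ℝ) * δ - (d : ℝ) < 1/2 := (abs_lt.mp hd).2
    have hdiff : ((ℓ0 : ℝ) + 1) ≤ (k0 : ℝ) - (k : ℝ) := by
      have h' : k + ℓ0 + 1 ≤ k0 := by omega
      have := (Nat.cast_le (α := ℝ)).mpr h'
      push_cast at this
      linarith
    have hmul : ((k0 : ℝ) - k) * 2 ≤ ((k0 : ℝ) - k) * δ := by
      apply mul_le_mul_of_nonneg_left hδ
      linarith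
    have hℓ0' : 3 * ((m : ℝ) + 1) ≤ 2 * (ℓ0 : ℝ) := by exact_mod_cast hℓ0
    have hm' : (1 : ℝ) ≤ (m : ℝ) := by exact_mod_cast hm
    have key : (h k : ℝ) ≤ (d : ℝ) - 2 := by nlinarith
    exact_mod_cast key
end

section
/- Let D : (0,∞) → N be a function (t ↦ dim of filtered homology) such that: (1) D(t) ≥ 1 for all t > 0; (2) D is locally constant outside a closed discrete set S ⊂ (0,∞); (3) (Smith inequality) D(pt) ≥ D(t) for all t > 0, for a fixed integer p ≥ 2; (4) there is a sequence C_l → ∞ with bounded gap, C_l ∉ S, and D(C_l) = 1 for all l. Then D(t) = 1 for all t ∈ (0,∞) \ S. -/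
open Filter

open Classical in
/-- If `C` tends to infinity with gaps at most `G`, then every point `a ≥ C 0`
has some `C l` in `(a, a + G]`. -/
lemma exists_C_in_gap (C : ℕ → ℝ) (hCtend : Tendsto C atTop atTop)
    (G : ℝ) (hgap : ∀ l, C (l + 1) - C l ≤ G) (a : ℝ) (ha : C 0 ≤ a) :
    ∃ l, a < C l ∧ C l ≤ a + G := by
  obtain ⟨N, hN⟩ := (hCtend.eventually_gt_atTop a).exists_forall_of_atTop
  set P : ℕ → Prop := fun l => C l ≤ a with hP
  have hP0 : P 0 := ha
  set l₀ := Nat.findGreatest P N with hl₀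
  have hPl₀ : P l₀ := Nat.findGreatest_spec (Nat.zero_le N) hP0
  have hl₀lt : l₀ < N := by
    rcases lt_or_eq_of_le (Nat.findGreatest_le N : l₀ ≤ N) with h | h
    · exact h
    · exfalso; have hNa := hN N le_rfl
      have hPN : P N := by rw [hl₀, h] at hPl₀; exact hPl₀
      exact absurd hPN (not_le.mpr hNa)
  refine ⟨l₀ + 1, ?_, ?_⟩
  · have : ¬ P (l₀ + 1) := Nat.findGreatest_is_greatest (Nat.lt_succ_self l₀) hl₀lt
    exact not_le.mp this
  · have := hgap l₀
    linarith [hPl₀]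

/-- Abstract version of Theorem C: D(t) = dim SH^t satisfies D ≥ 1 on (0,∞),
D is constant on intervals disjoint from the closed discrete set S (from which
every point outside S can be pushed strictly to the right), the Smith
inequality D(t) ≤ D(pt) holds for a fixed p ≥ 2, and there is a bounded-gap
sequence C_l → ∞ outside S with D(C_l) = 1. Then D(t) = 1 for all
t ∈ (0,∞) \ S. -/
theorem dim_one_from_smith (D : ℝ → ℕ) (S : Set ℝ)
    (h1 : ∀ t : ℝ, 0 < t → 1 ≤ D t)
    (h2 : ∀ t t' : ℝ, 0 < t → t ≤ t' → Set.Icc t t' ∩ S = ∅ →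
      ∀ τ ∈ Set.Icc t t', D τ = D t)
    (hS : ∀ t : ℝ, 0 < t → t ∉ S → ∃ t', t < t' ∧ Set.Icc t t' ∩ S = ∅)
    (p : ℕ) (hp : 2 ≤ p)
    (h3 : ∀ t : ℝ, 0 < t → D t ≤ D ((p : ℝ) * t))
    (C : ℕ → ℝ) (hCpos : ∀ l, 0 < C l) (hCtend : Tendsto C atTop atTop)
    (G : ℝ) (hgap : ∀ l, C (l + 1) - C l ≤ G)
    (hCS : ∀ l, C l ∉ S) (hC1 : ∀ l, D (C l) = 1) :
    ∀ t : ℝ, 0 < t → t ∉ S → D t = 1 := by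
  have hp1 : (1 : ℝ) < (p : ℝ) := by exact_mod_cast lt_of_lt_of_le one_lt_two hp
  have hppos : (0 : ℝ) < (p : ℝ) := lt_trans one_pos hp1
  -- iterated Smith inequality
  have hiter : ∀ k : ℕ, ∀ t : ℝ, 0 < t → D t ≤ D ((p : ℝ) ^ k * t) := by
    intro k
    induction k with
    | zero => intro t ht; simp
    | succ k ih =>
      intro t ht
      have h1' := ih t ht
      have h2' := h3 ((p : ℝ) ^ k * t) (mul_pos (pow_pos hppos k) ht)
      calc D t ≤ D ((p : ℝ) ^ k * t) := h1'
        _ ≤ D ((p : ℝ) * ((p : ℝ) ^ k * t)) := h2'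
        _ = D ((p : ℝ) ^ (k + 1) * t) := by ring_nf
  intro t ht htS
  obtain ⟨t', htt', hdisj⟩ := hS t ht htS
  -- choose k large enough
  obtain ⟨k, hk⟩ := pow_unbounded_of_one_lt (max (G / (t' - t)) (C 0 / t)) hp1
  have hkG : G < (p : ℝ) ^ k * (t' - t) := by
    have := lt_of_le_of_lt (le_max_left (G / (t' - t)) (C 0 / t)) hk
    rw [div_lt_iff₀ (by linarith)] at this
    linarith [this]
  have hkC : C 0 ≤ (p : ℝ) ^ k * t := by
    have := lt_of_le_of_lt (le_max_right (G / (t' - t)) (C 0 / t)) hk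
    rw [div_lt_iff₀ ht] at this
    linarith [this]
  obtain ⟨l, hl1, hl2⟩ := exists_C_in_gap C hCtend G hgap ((p : ℝ) ^ k * t) hkC
  -- τ = C l / p^k lies in (t, t']
  set τ := C l / (p : ℝ) ^ k with hτ
  have hpk : (0 : ℝ) < (p : ℝ) ^ k := pow_pos hppos k
  have hτlb : t < τ := by
    rw [hτ, lt_div_iff₀ hpk]; linarith [hl1]
  have hτub : τ ≤ t' := by
    rw [hτ, div_le_iff₀ hpk]
    have : (p : ℝ) ^ k * t + G < (p : ℝ) ^ k * t' := by linarith
    nlinarith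
  have hτmem : τ ∈ Set.Icc t t' := ⟨le_of_lt hτlb, hτub⟩
  have hDτ : D τ = D t := h2 t t' ht (le_of_lt htt') hdisj τ hτmem
  have hτpos : 0 < τ := lt_trans ht hτlb
  have hup : D τ ≤ D ((p : ℝ) ^ k * τ) := hiter k τ hτpos
  have hval : (p : ℝ) ^ k * τ = C l := by
    rw [hτ]; field_simp
  rw [hval, hC1 l] at hup
  have := h1 t ht
  omega
end

section
/- Let X be a countable set ('orbits') with functions deg : X → Z and A : X → (0,∞) (action), and let (I_i)_{i≥0} be a sequence of 'bars', where bar I_i begins at x_i and the x_i are enumerated in order of strictly increasing action, with x_0 a distinguished element of degree n and action 0, and where the bar ending at x_i is I_{i-1}. Suppose for each i ≥ 1 exactly one of the following holds: (P1) deg(I_{i-1}) = deg(x_i) − 1 and deg(I_i) = deg(x_i) + 1, or (P2) deg(I_{i-1}) = deg(x_i) and deg(I_i) = deg(x_i). If deg(I_0) = n, then all deg(I_i) have the same parity as n, and the sequences deg(x_i) and deg(I_i) are (not necessarily strictly) monotone non-decreasing; moreover deg(x_i) is strictly increasing at every value of parity n+1, i.e., for each m ≡ n+1 (mod 2) there is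 at most one i with deg(x_i) = m. -/
/-- Combinatorial core of Theorem D (O1), as a statement about integer
sequences a_i = deg(x_i) (i ≥ 1) and b_i = deg(I_i) (i ≥ 0) with b₀ = n,
where for every i ≥ 1 either (P1) b_{i−1} = a_i − 1 and b_i = a_i + 1, or
(P2) b_{i−1} = a_i and b_i = a_i. Then all b_i have the same parity as n,
both sequences are monotone non-decreasing, and for each m of parity n + 1
there is at most one i with a_i = m. -/
theorem staircase_parity_monotone (n : ℤ) (a b : ℕ → ℤ) (hb0 : b 0 = n)
    (halt : ∀ i : ℕ, 1 ≤ i →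
      (b (i - 1) = a i - 1 ∧ b i = a i + 1) ∨ (b (i - 1) = a i ∧ b i = a i)) :
    (∀ i : ℕ, b i ≡ n [ZMOD 2]) ∧
      (∀ i j : ℕ, i ≤ j → b i ≤ b j) ∧
      (∀ i j : ℕ, 1 ≤ i → i ≤ j → a i ≤ a j) ∧
      (∀ m : ℤ, m ≡ n + 1 [ZMOD 2] →
        ∀ i j : ℕ, 1 ≤ i → 1 ≤ j → a i = m → a j = m → i = j) := by
  have hstep : ∀ i : ℕ, b i = b (i + 1) ∨ b i + 2 = b (i + 1) := by
    intro i
    rcases halt (i + 1) (by omega) with ⟨h1, h2⟩ | ⟨h1, h2⟩ <;>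
      simp only [Nat.add_sub_cancel] at h1 <;> omega
  have hbmono : ∀ i j : ℕ, i ≤ j → b i ≤ b j := by
    intro i j hij
    exact monotone_nat_of_le_succ (fun k => by rcases hstep k with h | h <;> omega) hij
  have hpar : ∀ i : ℕ, b i ≡ n [ZMOD 2] := by
    intro i
    induction i with
    | zero => rw [hb0]
    | succ k ih =>
      refine Int.ModEq.trans ?_ ih
      rcases hstep k with h | h <;> simp only [Int.ModEq] <;> omega
  have hab : ∀ i : ℕ, 1 ≤ i → a i ≤ b i ∧ b (i - 1) ≤ a i := by
    intro i hi
    rcases halt i hi with ⟨h1, h2⟩ | ⟨h1, h2⟩ <;> omega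
  refine ⟨hpar, hbmono, ?_, ?_⟩
  · intro i j hi hij
    rcases eq_or_lt_of_le hij with rfl | hlt
    · exact le_refl _
    · have h1 : a i ≤ b i := (hab i hi).1
      have h2 : b (j - 1) ≤ a j := (hab j (by omega)).2
      have h3 : b i ≤ b (j - 1) := hbmono i (j - 1) (by omega)
      omega
  · intro m hm i j hi hj hai haj
    -- in case P2 at index i we'd have b i = a i = m, contradicting parity
    have key : ∀ k : ℕ, 1 ≤ k → a k = m → b (k - 1) = m - 1 ∧ b k = m + 1 := by
      intro k hk hak
      rcases halt k hk with ⟨h1, h2⟩ | ⟨h1, h2⟩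
      · omega
      · exfalso
        have hp := hpar k
        simp only [Int.ModEq] at hp hm
        omega
    have hki := key i hi hai
    have hkj := key j hj haj
    by_contra hne
    rcases Nat.lt_or_ge i j with hlt | hge
    · have := hbmono i (j - 1) (by omega); omega
    · have hlt : j < i := by omega
      have := hbmono j (i - 1) (by omega); omega
end

section
/- Let λ_1, …, λ_r ∈ R, a_1, …, a_r > 0, ε > 0, σ > 0, with σ < min_i a_i and ε < 1. Consider the system of inequalities in k = (k_1,…,k_r) ∈ Z^r: ‖k_i λ_i‖ < ε for all i, and |k_1 a_1 − k_i a_i| < σ for i ≥ 2. Then there is a sequence of solutions k^{(l)} ∈ Z^r with ‖k^{(l)}‖ → ∞, bounded gap, and, after replacing k^{(l)} by −k^{(l)} where necessary, all components k_i^{(l)} positive and tending to infinity. Moreover all components can be made divisible by any prescribed N ∈ N. -/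
/-!
Put `cᵢ = a₁ / (N aᵢ)`. The times `p ∈ ℕ` at which all `p cᵢ` and `p cᵢ N λᵢ` lie within `δ` of
an integer have bounded gaps: this is recurrence of a rotation of the compact torus, since finitely
many `δ`-balls around orbit points already cover the orbit closure. For such `p` the integers
`kᵢ = N · round (p cᵢ)` satisfy `kᵢ aᵢ ≈ p a₁` and `kᵢ λᵢ ≈ p cᵢ N λᵢ ≈ 0 mod 1` up to errors
`O(N δ)`. Running `p` through this syndetic set, beyond a point where every `p cᵢ ≥ 1/2`, gives
positive solutions with bounded gaps.
-/

open Filter Topology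

def IsSyndetic (s : Set ℕ) : Prop :=
  ∃ M : ℕ, ∀ n : ℕ, ∃ p ∈ s, n ≤ p ∧ p ≤ n + M

theorem IsSyndetic.exists_seq {s : Set ℕ} (hs : IsSyndetic s) (n₀ : ℕ) :
    ∃ p : ℕ → ℕ, ∃ M : ℕ, ∀ l, p l ∈ s ∧ n₀ + l ≤ p l ∧ |(p (l + 1) : ℝ) - p l| ≤ M := by
  obtain ⟨M, hM⟩ := hs
  choose p hps hp₁ hp₂ using fun l => hM (n₀ + l * (M + 1))
  refine ⟨p, 2 * M + 1, fun l => ⟨hps l, by nlinarith [hp₁ l], ?_⟩⟩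
  have h₁ := hp₁ (l + 1); have h₂ := hp₂ (l + 1)
  rw [add_mul, one_mul] at h₁ h₂
  have h₃ := hp₁ l; have h₄ := hp₂ l
  generalize l * (M + 1) = t at *
  have : |(p (l + 1) : ℤ) - p l| ≤ 2 * M + 1 := abs_le.2 ⟨by omega, by omega⟩
  exact_mod_cast this

theorem isSyndetic_norm_nsmul_lt {G : Type*} [SeminormedAddCommGroup G] [CompactSpace G]
    (x : G) {δ : ℝ} (hδ : 0 < δ) : IsSyndetic {n | ‖n • x‖ < δ} := by
  have hcover : closure (Set.range (· • x)) ⊆ ⋃ m : ℕ, Metric.ball (m • x) δ := fun y hy =>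
    Set.mem_iUnion.2 (Metric.mem_closure_range_iff.1 hy δ hδ)
  obtain ⟨F, hF⟩ := isClosed_closure.isCompact.elim_finite_subcover _
    (fun _ => Metric.isOpen_ball) hcover
  refine ⟨F.sup id, fun n => ?_⟩
  obtain ⟨m, hmF, hm⟩ := Set.mem_iUnion₂.1 (hF (subset_closure ⟨n + F.sup id, rfl⟩))
  have hmle : m ≤ F.sup id := Finset.le_sup (f := id) hmF
  refine ⟨n + F.sup id - m, ?_, by omega, by omega⟩
  show ‖_‖ < δ
  rwa [sub_nsmul _ (by omega), ← sub_eq_add_neg, ← dist_eq_norm]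

theorem isSyndetic_abs_sub_round_lt {ι : Type*} [Finite ι] (β : ι → ℝ) {δ : ℝ} (hδ : 0 < δ) :
    IsSyndetic {n : ℕ | ∀ j, |n * β j - round (n * β j)| < δ} := by
  have := Fintype.ofFinite ι
  convert isSyndetic_norm_nsmul_lt (β · : ι → UnitAddCircle) hδ using 3 with n
  simp only [pi_norm_lt_iff hδ, Pi.smul_apply, ← AddCircle.coe_nsmul, nsmul_eq_mul,
    UnitAddCircle.norm_eq]

theorem abs_sub_round_le_abs_sub_round_add (x y : ℝ) :
    |x - round x| ≤ |y - round y| + |x - y| :=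
  calc |x - round x| ≤ |x - round y| := round_le x (round y)
    _ ≤ |y - round y| + |x - y| := by
      rw [add_comm]; exact abs_sub_le x y (round y)

theorem abs_round_sub_round_le (x y : ℝ) : |(round x : ℝ) - round y| ≤ |x - y| + 1 := by
  have hx := abs_le.1 (abs_sub_round x); have hy := abs_le.1 (abs_sub_round y)
  have := neg_abs_le (x - y); have := le_abs_self (x - y)
  rw [abs_le]; constructor <;> linarith

theorem eventually_mul_lt_nhdsGT (C : ℝ) {e : ℝ} (he : 0 < e) : ∀ᶠ δ in 𝓝[>] 0, δ * C < e := by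
  have : Tendsto (fun δ : ℝ => δ * C) (𝓝 0) (𝓝 0) := by
    simpa using (continuous_id.mul continuous_const).tendsto (0 : ℝ) (f := fun δ : ℝ => δ * C)
  exact nhdsWithin_le_nhds (this.eventually (gt_mem_nhds he))

section ScaledRound

variable (N : ℕ) {u δ : ℝ}

theorem abs_natCast_mul_round_mul_sub_round_lt {lam : ℝ} (hu : |u - round u| < δ)
    (hv : |u * (N * lam) - round (u * (N * lam))| < δ) :
    |((N * round u : ℤ) : ℝ) * lam - round (((N * round u : ℤ) : ℝ) * lam)| <
      δ * (1 + N * |lam|) := by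
  have hdiff : |((N * round u : ℤ) : ℝ) * lam - u * (N * lam)| = N * |lam| * |u - round u| := by
    rw [show ((N * round u : ℤ) : ℝ) * lam - u * (N * lam) = N * lam * (round u - u) by
      push_cast; ring, abs_mul, abs_mul, Nat.abs_cast, abs_sub_comm]
  calc _ ≤ |u * (N * lam) - round (u * (N * lam))| + N * |lam| * |u - round u| :=
        hdiff ▸ abs_sub_round_le_abs_sub_round_add _ _
    _ < δ + N * |lam| * δ := add_lt_add_of_lt_of_le hv (by gcongr)
    _ = δ * (1 + N * |lam|) := by ring

theorem abs_natCast_mul_round_mul_sub_le {b v : ℝ} (hb : 0 ≤ b) (hu : |u - round u| ≤ δ)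
    (hv : N * u * b = v) : |((N * round u : ℤ) : ℝ) * b - v| ≤ N * b * δ := by
  rw [← hv, show ((N * round u : ℤ) : ℝ) * b - N * u * b = N * b * (round u - u) by
    push_cast; ring, abs_mul, abs_sub_comm, abs_of_nonneg (by positivity)]
  gcongr

theorem abs_natCast_mul_round_sub_le (x y : ℝ) :
    |(N * round x : ℤ) - N * round y| ≤ ⌈(N : ℝ) * (|x - y| + 1)⌉ := by
  refine (Int.cast_le (R := ℝ)).1 ?_
  calc ((|(N * round x : ℤ) - N * round y| : ℤ) : ℝ) = N * |(round x : ℝ) - round y| := by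
        push_cast; rw [← mul_sub, abs_mul, Nat.abs_cast]
    _ ≤ N * (|x - y| + 1) := by gcongr; exact abs_round_sub_round_le x y
    _ ≤ _ := Int.le_ceil _

theorem natCast_mul_round_pos (hN : 0 < N) (hu : 1 / 2 ≤ u) : 0 < (N * round u : ℤ) :=
  mul_pos (by exact_mod_cast hN)
    ((Int.cast_pos (R := ℝ)).1 (by linarith [sub_half_lt_round u]))

end ScaledRound

theorem tendsto_round_atTop {α : Type*} {l : Filter α} {f : α → ℝ} (hf : Tendsto f l atTop) :
    Tendsto (fun x => round (f x)) l atTop :=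
  tendsto_intCast_atTop_iff.1 <| tendsto_atTop_mono (fun _ => (sub_half_lt_round _).le) <|
    tendsto_atTop_add_const_right _ _ hf

theorem action_matching_solutions_general (r : ℕ) (hr : 0 < r)
    (lam a : Fin r → ℝ) (ha : ∀ i, 0 < a i)
    (ε σ : ℝ) (hε : 0 < ε) (hσ : 0 < σ)
    (N : ℕ) (hN : 0 < N) :
    ∃ K : ℕ → (Fin r → ℤ),
      (∀ l i, |(K l i : ℝ) * lam i - round ((K l i : ℝ) * lam i)| < ε) ∧
      (∀ l i, |(K l ⟨0, hr⟩ : ℝ) * a ⟨0, hr⟩ - (K l i : ℝ) * a i| < σ) ∧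
      (∀ l i, 0 < K l i) ∧
      (∀ i, Tendsto (fun l => K l i) atTop atTop) ∧
      (∃ G : ℤ, ∀ l i, |K (l + 1) i - K l i| ≤ G) ∧
      (∀ l i, (N : ℤ) ∣ K l i) := by
  set i0 : Fin r := ⟨0, hr⟩
  set c : Fin r → ℝ := fun i => a i0 / (N * a i)
  have hc : ∀ i, 0 < c i := fun i => div_pos (ha i0) (mul_pos (by exact_mod_cast hN) (ha i))
  have hca : ∀ i, N * c i * a i = a i0 := fun i => by
    simp only [c]; field_simp [(ha i).ne', (ha i0).ne']
  obtain ⟨δ, hδ, hδ₀⟩ : ∃ δ, (∀ i, δ * (1 + N * |lam i|) < ε ∧ δ * (N * (a i0 + a i)) < σ) ∧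
      0 < δ := ((eventually_all.2 fun i => (eventually_mul_lt_nhdsGT _ hε).and
        (eventually_mul_lt_nhdsGT _ hσ)).and self_mem_nhdsWithin).exists
  obtain ⟨n₀, hn₀⟩ : ∃ n₀ : ℕ, ∀ i, 1 / 2 ≤ n₀ * c i := (eventually_all.2 fun i =>
    (tendsto_natCast_atTop_atTop.atTop_mul_const (hc i)).eventually_ge_atTop _).exists
  obtain ⟨p, M, hp⟩ :=
    (isSyndetic_abs_sub_round_lt (Sum.elim c fun i => c i * (N * lam i)) hδ₀).exists_seq n₀
  have hu : ∀ l i, |p l * c i - round (p l * c i)| < δ := fun l i => (hp l).1 (.inl i)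
  have hv : ∀ l i, |p l * c i * (N * lam i) - round (p l * c i * (N * lam i))| < δ :=
    fun l i => by simpa only [Sum.elim_inr, mul_assoc] using (hp l).1 (.inr i)
  refine ⟨fun l i => N * round (p l * c i), fun l i => ?_, fun l i => ?_, fun l i => ?_,
    fun i => ?_, ?_, fun l i => dvd_mul_right _ _⟩
  · exact (abs_natCast_mul_round_mul_sub_round_lt N (hu l i) (hv l i)).trans (hδ i).1
  · have hK : ∀ j, |((N * round (p l * c j) : ℤ) : ℝ) * a j - p l * a i0| ≤ N * a j * δ :=
      fun j => abs_natCast_mul_round_mul_sub_le N (ha j).le (hu l j).le (by rw [← hca j]; ring)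
    calc _ ≤ _ := abs_sub_le _ (p l * a i0 : ℝ) _
      _ < σ := by rw [abs_sub_comm (p l * a i0 : ℝ)]; linarith [hK i0, hK i, (hδ i).2]
  · exact natCast_mul_round_pos N hN <| (hn₀ i).trans <| mul_le_mul_of_nonneg_right
      (by exact_mod_cast (Nat.le_add_right _ _).trans (hp l).2.1) (hc i).le
  · have hp_top : Tendsto (fun l => (p l : ℝ)) atTop atTop := tendsto_natCast_atTop_atTop.comp
      (tendsto_atTop_mono (fun l => (Nat.le_add_left l n₀).trans (hp l).2.1) tendsto_id)
    exact (tendsto_round_atTop (hp_top.atTop_mul_const (hc i))).const_mul_atTop'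
      (by exact_mod_cast hN)
  · obtain ⟨C, hC⟩ := Finite.exists_le c
    refine ⟨⌈(N : ℝ) * (M * C + 1)⌉, fun l i =>
      (abs_natCast_mul_round_sub_le N _ _).trans (Int.ceil_mono ?_)⟩
    rw [← sub_mul, abs_mul, abs_of_pos (hc i)]
    have := mul_le_mul (hp l).2.2 (hC i) (hc i).le (Nat.cast_nonneg M)
    gcongr

/-- Action-matching step of the index recurrence theorem: given λ₁,…,λ_r ∈ ℝ,
positive a₁,…,a_r, 0 < ε < 1 and 0 < σ < min aᵢ, the system
‖kᵢλᵢ‖ < ε (all i), |k₁a₁ − kᵢaᵢ| < σ (i ≥ 2) has a sequence of integer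
solutions with all components positive, tending to infinity, bounded gap, and
divisible by any prescribed N. (Here ‖t‖ is the distance to the nearest
integer.) -/
theorem action_matching_solutions (r : ℕ) (hr : 0 < r)
    (lam a : Fin r → ℝ) (ha : ∀ i, 0 < a i)
    (ε σ : ℝ) (hε : 0 < ε) (hε1 : ε < 1) (hσ : 0 < σ) (hσa : ∀ i, σ < a i)
    (N : ℕ) (hN : 0 < N) :
    ∃ K : ℕ → (Fin r → ℤ),
      (∀ l i, |(K l i : ℝ) * lam i - round ((K l i : ℝ) * lam i)| < ε) ∧
      (∀ l i, |(K l ⟨0, hr⟩ : ℝ) * a ⟨0, hr⟩ - (K l i : ℝ) * a i| < σ) ∧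
      (∀ l i, 0 < K l i) ∧
      (∀ i, Tendsto (fun l => K l i) atTop atTop) ∧
      (∃ G : ℤ, ∀ l i, |K (l + 1) i - K l i| ≤ G) ∧
      (∀ l i, (N : ℤ) ∣ K l i) :=
  action_matching_solutions_general r hr lam a ha ε σ hε hσ N hN
end
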